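/- For every n ≥ 0, the set F_n = {s ∈ P : |s| ≤ n} is a filter of (P, ≥_∞) (if s ∈ F_n and u ≥_∞ s then u ∈ F_n) and a sublattice of (P, ≥_∞): if s, t ∈ F_n then inf_{(P,≥_∞)}(s,t) ∈ F_n and sup_{(P,≥_∞)}(s,t) ∈ F_n. -/

import Mathlib

/-!
Partitions are modelled as functions `s : ℕ → ℕ` (0-based: `s 0` is the first
part `s_1`), nonincreasing and eventually zero.  A paper index `i ≥ 1`
(columns, transitions `→_i`, increments `s^{↓i}`) corresponds to the Lean
index `i - 1`.
-/

/-- `s` is a partition: nonincreasing and eventually zero. -/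
def IsPartition (s : ℕ → ℕ) : Prop :=
  (∀ i, s (i + 1) ≤ s i) ∧ ∃ N, ∀ i, N ≤ i → s i = 0

/-- `j`-th suffix sum (0-based: `suff s 0` is the total sum `|s|`,
`suff s (j-1)` is the paper's `Σ_j`). -/
noncomputable def suff (s : ℕ → ℕ) (j : ℕ) : ℕ := ∑' i, s (j + i)

/-- `s` is a partition of `n`. -/
noncomputable def IsPartOf (n : ℕ) (s : ℕ → ℕ) : Prop := IsPartition s ∧ suff s 0 = n

/-- Prefix sum of the first `j` parts. -/
def psum (s : ℕ → ℕ) (j : ℕ) : ℕ := ∑ i ∈ Finset.range j, s i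

/-- Dominance ordering: `Dom s t` means `s ≥ t`, i.e. every prefix sum of `s`
is at least the corresponding prefix sum of `t`. -/
def Dom (s t : ℕ → ℕ) : Prop := ∀ j, psum t j ≤ psum s j

/-- `s^{↓(i+1)}`: add one grain on the (0-based) `i`-th column. -/
def incr (s : ℕ → ℕ) (i : ℕ) : ℕ → ℕ := Function.update s i (s i + 1)

/-- Move one grain from column `a` to column `b` (0-based). -/
def moveGrain (s : ℕ → ℕ) (a b : ℕ) : ℕ → ℕ :=
  fun j => if j = a then s a - 1 else if j = b then s b + 1 else s j

/-- `s` has a cliff at (0-based) column `i`: `s_i ≥ s_{i+1} + 2`. -/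
def Cliff (s : ℕ → ℕ) (i : ℕ) : Prop := s (i + 1) + 2 ≤ s i

/-- `s` has a slippery step at (0-based) column `i`, the plateau ending at
(0-based) column `m`:  `s_i - 1 = s_{i+1} = ⋯ = s_m = s_{m+1} + 1` (in 0-based
indices), with `m ≥ i + 1`. -/
def SlipAt (s : ℕ → ℕ) (i m : ℕ) : Prop :=
  i + 1 ≤ m ∧ (∀ j, i + 1 ≤ j → j ≤ m → s j + 1 = s i) ∧ s (m + 1) + 2 = s i

/-- The transition `s →_{i+1} t` of the paper (0-based `i`): a fall from a
cliff at `i`, or a slip from a slippery step at `i` (the grain landing just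
after the plateau). -/
def Step (s : ℕ → ℕ) (i : ℕ) (t : ℕ → ℕ) : Prop :=
  (Cliff s i ∧ t = moveGrain s i (i + 1)) ∨
  (∃ m, SlipAt s i m ∧ t = moveGrain s i (m + 1))

/-- The set of configurations directly reachable from `s`. -/
def dirreach (s : ℕ → ℕ) : Set (ℕ → ℕ) := {t | ∃ i, Step s i t}

/-- `s` has a (slippery, if `l ≥ 2`) plateau of length `l` at `1`:
`s_1 = s_2 = ⋯ = s_l = s_{l+1} + 1`. -/
def SlipperyPlateau1 (s : ℕ → ℕ) (l : ℕ) : Prop :=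
  (∀ j, j < l → s j = s 0) ∧ s l + 1 = s 0

/-- `s` has a non-slippery plateau at `1`:
`s_1 = ⋯ = s_l ≥ s_{l+1} + 2` for some `l ≥ 2`. -/
def NonSlipperyPlateau1 (s : ℕ → ℕ) : Prop :=
  ∃ l, 2 ≤ l ∧ (∀ j, j < l → s j = s 0) ∧ s l + 2 ≤ s 0

/-- `s` has a slippery step at `1`. -/
def SlipperyStep1 (s : ℕ → ℕ) : Prop := ∃ m, SlipAt s 0 m

/-- `s` has a non-slippery step at `1`: `s_1 = s_2 + 1` and
`s_2 = ⋯ = s_m ≥ s_{m+1} + 2` for some `m ≥ 2` (here `m` is 0-based, `≥ 1`). -/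
def NonSlipperyStep1 (s : ℕ → ℕ) : Prop :=
  s 0 = s 1 + 1 ∧ ∃ m, 1 ≤ m ∧ (∀ j, 1 ≤ j → j ≤ m → s j = s 1) ∧ s (m + 1) + 2 ≤ s 1

/-- `c` is the infimum of `a` and `b` in the dominance lattice `L_B(n)`. -/
noncomputable def IsInfOn (n : ℕ) (a b c : ℕ → ℕ) : Prop :=
  IsPartOf n c ∧ Dom a c ∧ Dom b c ∧ ∀ d, IsPartOf n d → Dom a d → Dom b d → Dom c d

/-- `c` is the supremum of `a` and `b` in the dominance lattice `L_B(n)`. -/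
noncomputable def IsSupOn (n : ℕ) (a b c : ℕ → ℕ) : Prop :=
  IsPartOf n c ∧ Dom c a ∧ Dom c b ∧ ∀ d, IsPartOf n d → Dom d a → Dom d b → Dom d c

/-- The order `≥_∞` on the set `P` of all partitions: `GeInf s t` means
`s ≥_∞ t`, i.e. every suffix sum of `s` is at most that of `t`. -/
noncomputable def GeInf (s t : ℕ → ℕ) : Prop := ∀ j, suff s j ≤ suff t j

/-- `c` is the infimum of `a` and `b` in `(P, ≥_∞)`. -/
noncomputable def IsInfP (a b c : ℕ → ℕ) : Prop :=
  IsPartition c ∧ GeInf a c ∧ GeInf b c ∧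
    ∀ d, IsPartition d → GeInf a d → GeInf b d → GeInf c d

/-- `c` is the supremum of `a` and `b` in `(P, ≥_∞)`. -/
noncomputable def IsSupP (a b c : ℕ → ℕ) : Prop :=
  IsPartition c ∧ GeInf c a ∧ GeInf c b ∧
    ∀ d, IsPartition d → GeInf d a → GeInf d b → GeInf d c

/-- The map `π`: delete the first part, `(s_1, s_2, …) ↦ (s_2, …)`. -/
def shift (s : ℕ → ℕ) : ℕ → ℕ := fun i => s (i + 1)

/-!
Upward closure and closure under suprema are immediate, since `s ≥_∞ t` bounds `|s| = Σ_1(s)`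
by `|t|`. For the infimum, the sequence `j ↦ max (Σ_j(s), Σ_j(t))` is antitone, convex
(the second differences of `Σ_j(s)` are `s_j - s_{j+1} ≥ 0`, and a maximum of convex sequences
is convex) and eventually zero, so it is the suffix-sum sequence of the
partition of its first differences. That partition lies below `s` and `t`, hence below their
infimum `u`, giving `|u| ≤ max (|s|, |t|)`.
-/

section SuffixSums

variable {s : ℕ → ℕ} {N : ℕ}

theorem suff_eq_sum_range (hN : ∀ i, N ≤ i → s i = 0) (j : ℕ) :
    suff s j = ∑ i ∈ Finset.range N, s (j + i) :=
  tsum_eq_sum fun i hi => hN _ (by simp only [Finset.mem_range, not_lt] at hi; omega)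

theorem suff_eq_zero_of_le (hN : ∀ i, N ≤ i → s i = 0) {j : ℕ} (hj : N ≤ j) : suff s j = 0 := by
  rw [suff_eq_sum_range hN]
  exact Finset.sum_eq_zero fun i _ => hN _ (by omega)

theorem suff_eq_add_suff_succ (hN : ∀ i, N ≤ i → s i = 0) (j : ℕ) :
    suff s j = s j + suff s (j + 1) := by
  rw [suff_eq_sum_range (N := N + 1) (fun i hi => hN i (by omega)), suff_eq_sum_range hN,
    Finset.sum_range_succ', add_zero, add_comm]
  simp only [add_assoc, add_comm 1]

end SuffixSums

theorem exists_isPartition_suff_eq {M : ℕ → ℕ} {N : ℕ} (hanti : ∀ j, M (j + 1) ≤ M j)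
    (hconv : ∀ j, M (j + 1) + M (j + 1) ≤ M j + M (j + 2)) (hzero : ∀ j, N ≤ j → M j = 0) :
    ∃ d, IsPartition d ∧ ∀ j, suff d j = M j := by
  have hd : ∀ i, N ≤ i → M i - M (i + 1) = 0 := fun i hi => by
    rw [hzero i hi, hzero (i + 1) (by omega)]
  have telescope :
      ∀ j K, ∑ i ∈ Finset.range K, (M (j + i) - M (j + i + 1)) = M j - M (j + K) := by
    intro j K
    induction K with
    | zero => simp
    | succ K ih =>
      have hle : M (j + K) ≤ M j := antitone_nat_of_succ_le hanti (Nat.le_add_right j K)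
      rw [Finset.sum_range_succ, ih, ← add_assoc]
      have := hanti (j + K)
      omega
  refine ⟨fun i => M i - M (i + 1), ⟨fun i => ?_, N, hd⟩, fun j => ?_⟩
  · show M (i + 1) - M (i + 2) ≤ M i - M (i + 1)
    have := hconv i
    have := hanti (i + 1)
    omega
  · rw [suff_eq_sum_range hd, telescope, hzero (j + N) (by omega), Nat.sub_zero]

section Partitions

variable {s t : ℕ → ℕ}

theorem IsPartition.suff_succ_le (hs : IsPartition s) (j : ℕ) : suff s (j + 1) ≤ suff s j := by
  obtain ⟨N, hN⟩ := hs.2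
  rw [suff_eq_add_suff_succ hN j]
  omega

theorem IsPartition.suff_convex (hs : IsPartition s) (j : ℕ) :
    suff s (j + 1) + suff s (j + 1) ≤ suff s j + suff s (j + 2) := by
  obtain ⟨N, hN⟩ := hs.2
  rw [suff_eq_add_suff_succ hN j, suff_eq_add_suff_succ hN (j + 1)]
  have := hs.1 j
  change _ ≤ _ + suff s (j + 1 + 1)
  omega

theorem exists_isPartition_suff_eq_max (hs : IsPartition s) (ht : IsPartition t) :
    ∃ d, IsPartition d ∧ ∀ j, suff d j = max (suff s j) (suff t j) := by
  obtain ⟨Ns, hNs⟩ := hs.2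
  obtain ⟨Nt, hNt⟩ := ht.2
  refine exists_isPartition_suff_eq (N := max Ns Nt) (fun j => ?_) (fun j => ?_) (fun j hj => ?_)
  · exact max_le_max (hs.suff_succ_le j) (ht.suff_succ_le j)
  · have := hs.suff_convex j
    have := ht.suff_convex j
    have := hs.suff_succ_le (j + 1)
    have := ht.suff_succ_le (j + 1)
    omega
  · rw [suff_eq_zero_of_le hNs (le_of_max_le_left hj),
      suff_eq_zero_of_le hNt (le_of_max_le_right hj), max_self]

theorem IsInfP.suff_zero_le_max {u : ℕ → ℕ} (hs : IsPartition s) (ht : IsPartition t)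
    (hu : IsInfP s t u) : suff u 0 ≤ max (suff s 0) (suff t 0) := by
  obtain ⟨d, hd, hsuff⟩ := exists_isPartition_suff_eq_max hs ht
  have hsd : GeInf s d := fun j => (hsuff j).symm ▸ le_max_left _ _
  have htd : GeInf t d := fun j => (hsuff j).symm ▸ le_max_right _ _
  exact hsuff 0 ▸ hu.2.2.2 d hd hsd htd 0

end Partitions

/-- For every `n`, the set `F_n = {s ∈ P : |s| ≤ n}` is a
filter of `(P, ≥_∞)` and a sublattice: it is upward closed for `≥_∞` and
closed under infima and suprema. -/
theorem stmt17 (n : ℕ) :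
    (∀ s u : ℕ → ℕ, IsPartition s → suff s 0 ≤ n → IsPartition u →
      GeInf u s → suff u 0 ≤ n) ∧
    (∀ s t u : ℕ → ℕ, IsPartition s → IsPartition t → suff s 0 ≤ n →
      suff t 0 ≤ n → IsInfP s t u → suff u 0 ≤ n) ∧
    (∀ s t u : ℕ → ℕ, IsPartition s → IsPartition t → suff s 0 ≤ n →
      suff t 0 ≤ n → IsSupP s t u → suff u 0 ≤ n) :=
  ⟨fun _ _ _ hsn _ hus => (hus 0).trans hsn,
    fun _ _ _ hs ht hsn htn hu => (hu.suff_zero_le_max hs ht).trans (max_le hsn htn),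
    fun _ _ _ _ _ hsn _ hu => (hu.2.1 0).trans hsn⟩
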